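/- In an intersecting (2,m)-system covering V (with ℓ ≥ 3), suppose w(p_ℓ) = 0 and p_ℓ is a pendant edge of G, i.e., exactly one of the two vertices of p_ℓ belongs to some other edge p_h (h ≠ ℓ). Then for every i ≠ ℓ with p_i ∩ p_ℓ ≠ ∅ one has τ(G′∖p_i) = τ(G∖p_i) − 1, i.e., w′(p_i) = w(p_i) + 1, where G′ = G − p_ℓ; consequently w(G′) ≥ w(G) + 1. -/

import Mathlib

/-!
Let `u` be the vertex of the pendant edge `p ℓ` that lies on no other edge. For an edge `p i`
meeting `p ℓ`, the two edges share the other vertex, so `p ℓ ∖ p i = {u}`: every truncated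
transversal for `G ∖ p i` must contain `u`, and `u` is useless for all other edges. Hence
deleting `p ℓ` lowers `τ(G ∖ p i)` by exactly one, while for the remaining edges deleting a
constraint can only lower `τ`. Since `w(p ℓ) = 0`, summing gives `w(G′) ≥ w(G) + 1`.
-/

open Finset

/-- The minimum cardinality of a set `S ⊆ A` meeting every member `q i`, `i ∈ s`,
of a set system (a transversal number). -/
noncomputable def transversalNum {α ι : Type*} [DecidableEq α]
    (A : Finset α) (s : Finset ι) (q : ι → Finset α) : ℕ :=
  sInf {n : ℕ | ∃ S : Finset α, S ⊆ A ∧ S.card = n ∧ ∀ i ∈ s, (S ∩ q i).Nonempty}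

section Transversal

variable {α ι : Type*} [DecidableEq α] {A S : Finset α} {s t : Finset ι} {q : ι → Finset α}

theorem transversalNum_le_card (hSA : S ⊆ A) (hS : ∀ i ∈ s, (S ∩ q i).Nonempty) :
    transversalNum A s q ≤ S.card :=
  Nat.sInf_le ⟨S, hSA, rfl, hS⟩

theorem exists_card_eq_transversalNum (hA : ∀ i ∈ s, (A ∩ q i).Nonempty) :
    ∃ S ⊆ A, S.card = transversalNum A s q ∧ ∀ i ∈ s, (S ∩ q i).Nonempty := by
  have hne : {n : ℕ | ∃ S ⊆ A, S.card = n ∧ ∀ i ∈ s, (S ∩ q i).Nonempty}.Nonempty :=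
    ⟨A.card, A, Subset.rfl, rfl, hA⟩
  exact Nat.sInf_mem hne

theorem transversalNum_mono (hst : s ⊆ t) (hA : ∀ i ∈ t, (A ∩ q i).Nonempty) :
    transversalNum A s q ≤ transversalNum A t q := by
  obtain ⟨S, hSA, hcard, hS⟩ := exists_card_eq_transversalNum hA
  exact hcard ▸ transversalNum_le_card hSA fun i hi => hS i (hst hi)

theorem transversalNum_erase_add_one [DecidableEq ι] {j : ι} {u : α}
    (hA : ∀ i ∈ s, (A ∩ q i).Nonempty) (hj : j ∈ s) (hqj : q j = {u}) (huA : u ∈ A) (hu : ∀ i ∈ s, i ≠ j → u ∉ q i) :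
    transversalNum A (s.erase j) q + 1 = transversalNum A s q := by
  obtain ⟨S, hSA, hS, hShit⟩ := exists_card_eq_transversalNum hA
  have huS : u ∈ S := by
    obtain ⟨x, hx⟩ := hShit j hj
    rw [hqj, mem_inter, mem_singleton] at hx
    exact hx.2 ▸ hx.1
  have hle : transversalNum A (s.erase j) q ≤ (S.erase u).card := by
    refine transversalNum_le_card ((erase_subset u S).trans hSA) fun i hi => ?_
    obtain ⟨hij, his⟩ := mem_erase.1 hi
    obtain ⟨x, hx⟩ := hShit i his
    obtain ⟨hxS, hxq⟩ := mem_inter.1 hx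
    exact ⟨x, mem_inter.2 ⟨mem_erase.2 ⟨fun hxu => hu i his hij (hxu ▸ hxq), hxS⟩, hxq⟩⟩
  obtain ⟨S', hS'A, hS', hS'hit⟩ :=
    exists_card_eq_transversalNum fun i hi => hA i (mem_of_mem_erase hi)
  have hge : transversalNum A s q ≤ (insert u S').card := by
    refine transversalNum_le_card (insert_subset huA hS'A) fun i hi => ?_
    by_cases hij : i = j
    · exact ⟨u, mem_inter.2 ⟨mem_insert_self u S', hij ▸ hqj ▸ mem_singleton_self u⟩⟩
    · exact (hS'hit i (mem_erase.2 ⟨hij, hi⟩)).mono (inter_subset_inter_right (subset_insert u S'))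
  have := card_erase_add_one huS
  have := card_insert_le u S'
  omega

end Transversal

section EdgeSystem

variable {α ι : Type*} [DecidableEq α] {p : ι → Finset α}

theorem injective_of_inter_eq_empty_iff {M : ι → Finset α}
    (hpM : ∀ i j, p i ∩ M j = ∅ ↔ i = j) : Function.Injective p := fun i j hij =>
  (hpM i j).1 (hij ▸ (hpM j j).2 rfl)

theorem inter_sdiff_nonempty [Fintype α] {k : ℕ} (hinj : Function.Injective p)
    (hp : ∀ i, (p i).card = k) {i h : ι} (hhi : h ≠ i) :
    ((univ \ p i) ∩ (p h \ p i)).Nonempty := by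
  rw [inter_eq_right.2 (sdiff_subset_sdiff (subset_univ _) subset_rfl), sdiff_nonempty]
  exact fun hsub => hhi (hinj (eq_of_subset_of_card_le hsub (by rw [hp, hp])))

theorem exists_sdiff_eq_singleton_of_pendant {j : ι} (hpj : (p j).card = 2)
    (hpendant : ∃! v, v ∈ p j ∧ ∃ h, h ≠ j ∧ v ∈ p h) :
    ∃ u, (∀ h, h ≠ j → u ∉ p h) ∧ ∀ i, i ≠ j → (p i ∩ p j).Nonempty → p j \ p i = {u} := by
  obtain ⟨v, ⟨hvj, -⟩, hv⟩ := hpendant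
  obtain ⟨u, huj, huv⟩ := exists_mem_ne (by omega : 1 < (p j).card) v
  have hprivate : ∀ h, h ≠ j → u ∉ p h := fun h hhj hu => huv (hv u ⟨huj, h, hhj, hu⟩)
  have hpair : p j ⊆ {u, v} :=
    (eq_of_subset_of_card_le (insert_subset huj (singleton_subset_iff.2 hvj))
      (by rw [hpj, card_pair huv])).symm.subset
  refine ⟨u, hprivate, fun i hij ⟨w, hw⟩ => ?_⟩
  obtain ⟨hwi, hwj⟩ := mem_inter.1 hw
  have hvi : v ∈ p i := hv w ⟨hwj, i, hij, hwi⟩ ▸ hwi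
  ext x
  simp only [mem_sdiff, mem_singleton]
  constructor
  · rintro ⟨hxj, hxi⟩
    rcases mem_insert.1 (hpair hxj) with rfl | hxv
    · rfl
    · exact absurd (mem_singleton.1 hxv ▸ hvi) hxi
  · rintro rfl
    exact ⟨huj, hprivate i hij⟩

end EdgeSystem

theorem pendant_zero_weight_edge_general {α : Type*} [Fintype α] [DecidableEq α]
    (m ℓ : ℕ)
    (p M : Fin ℓ → Finset α)
    (hp : ∀ i, (p i).card = 2)
    (hpM : ∀ i j, p i ∩ M j = ∅ ↔ i = j)
    (jl : Fin ℓ)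
    (hw : (m : ℤ)
        - (transversalNum (Finset.univ \ p jl) (Finset.univ.erase jl) (fun h => p h \ p jl) : ℤ)
      = 0)
    (hpendant : ∃! v : α, v ∈ p jl ∧ ∃ h : Fin ℓ, h ≠ jl ∧ v ∈ p h) :
    (∀ i : Fin ℓ, i ≠ jl → (p i ∩ p jl).Nonempty →
      (transversalNum (Finset.univ \ p i) ((Finset.univ.erase jl).erase i)
          (fun h => p h \ p i) : ℤ)
        = (transversalNum (Finset.univ \ p i) (Finset.univ.erase i) (fun h => p h \ p i) : ℤ)
            - 1) ∧
    (∑ j : Fin ℓ, ((m : ℤ)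
        - (transversalNum (Finset.univ \ p j) (Finset.univ.erase j) (fun h => p h \ p j) : ℤ)))
        + 1
      ≤ ∑ i ∈ Finset.univ.erase jl, ((m : ℤ)
          - (transversalNum (Finset.univ \ p i) ((Finset.univ.erase jl).erase i)
              (fun h => p h \ p i) : ℤ)) := by
  have hfeas : ∀ i, ∀ h ∈ univ.erase i, ((univ \ p i) ∩ (p h \ p i)).Nonempty := fun i h hh =>
    inter_sdiff_nonempty (injective_of_inter_eq_empty_iff hpM) hp (mem_erase.1 hh).1
  obtain ⟨u, hu, hsdiff⟩ := exists_sdiff_eq_singleton_of_pendant (hp jl) hpendant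
  have hdrop : ∀ i, i ≠ jl → (p i ∩ p jl).Nonempty →
      transversalNum (univ \ p i) ((univ.erase jl).erase i) (fun h => p h \ p i) + 1
        = transversalNum (univ \ p i) (univ.erase i) (fun h => p h \ p i) := fun i hij hmeet => by
    rw [erase_right_comm]
    exact transversalNum_erase_add_one (hfeas i) (mem_erase.2 ⟨hij.symm, mem_univ jl⟩)
      (hsdiff i hij hmeet) (mem_sdiff.2 ⟨mem_univ u, hu i hij⟩)
      fun h _ hhj hu' => hu h hhj (mem_sdiff.1 hu').1
  refine ⟨fun i hij hmeet => by have := hdrop i hij hmeet; omega, ?_⟩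
  obtain ⟨v, ⟨hvj, i₀, hi₀, hvi₀⟩, -⟩ := hpendant
  have hmeet₀ : (p i₀ ∩ p jl).Nonempty := ⟨v, mem_inter.2 ⟨hvi₀, hvj⟩⟩
  rw [← add_sum_erase univ _ (mem_univ jl), hw, zero_add]
  refine Int.add_one_le_iff.2 (sum_lt_sum (fun i hi => ?_) ⟨i₀, mem_erase.2 ⟨hi₀, mem_univ _⟩, ?_⟩)
  · have := transversalNum_mono (erase_subset_erase i (erase_subset jl univ)) (hfeas i)
    omega
  · have := hdrop i₀ hi₀ hmeet₀
    omega

/-- pendant_zero_weight_edge -/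
theorem pendant_zero_weight_edge {α : Type*} [Fintype α] [DecidableEq α]
    (m ℓ : ℕ) (hℓ : 3 ≤ ℓ)
    (p M : Fin ℓ → Finset α)
    (hp : ∀ i, (p i).card = 2)
    (hM : ∀ i, (M i).card = m)
    (hpM : ∀ i j, p i ∩ M j = ∅ ↔ i = j)
    (hcover : Finset.univ.biUnion M = (Finset.univ : Finset α))
    (jl : Fin ℓ) (hjl : (jl : ℕ) = ℓ - 1)
    (hw : (m : ℤ)
        - (transversalNum (Finset.univ \ p jl) (Finset.univ.erase jl) (fun h => p h \ p jl) : ℤ)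
      = 0)
    (hpendant : ∃! v : α, v ∈ p jl ∧ ∃ h : Fin ℓ, h ≠ jl ∧ v ∈ p h) :
    (∀ i : Fin ℓ, i ≠ jl → (p i ∩ p jl).Nonempty →
      (transversalNum (Finset.univ \ p i) ((Finset.univ.erase jl).erase i)
          (fun h => p h \ p i) : ℤ)
        = (transversalNum (Finset.univ \ p i) (Finset.univ.erase i) (fun h => p h \ p i) : ℤ)
            - 1) ∧
    (∑ j : Fin ℓ, ((m : ℤ)
        - (transversalNum (Finset.univ \ p j) (Finset.univ.erase j) (fun h => p h \ p j) : ℤ)))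
        + 1
      ≤ ∑ i ∈ Finset.univ.erase jl, ((m : ℤ)
          - (transversalNum (Finset.univ \ p i) ((Finset.univ.erase jl).erase i)
              (fun h => p h \ p i) : ℤ)) :=
  pendant_zero_weight_edge_general m ℓ p M hp hpM jl hw hpendant
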